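/- arXiv:1702.08536 — 2 statements merged into one kernel-verified Lean document; each statement's English description precedes it below -/
import Mathlib

section
/- Let σ0, σ1 > 0 with σ0 ≠ σ1, μ1 > μ0, φ ∈ (0,1), and let f0, f1 be the probability density functions of N(μ0, σ0²) and N(μ1, σ1²) respectively. Define g : ℝ → ℝ by g(x) = φ·f1(x) / (φ·f1(x) + (1−φ)·f0(x)). Then g is not monotone on ℝ (g is neither monotone nondecreasing nor monotone nonincreasing). -/
/-!
The posterior probability is the sigmoid of the posterior log-odds
`log φ - log (1 - φ) + log f1 x - log f0 x`. For Gaussian densities the log-likelihood ratio is a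
quadratic in `x` whose leading coefficient `(1/σ0² - 1/σ1²)/2` vanishes only when `σ0 = σ1`.
Since the sigmoid is strictly increasing, `g` is monotone (antitone) iff this quadratic is, and a
genuine quadratic is neither: it turns around at its vertex.
-/

open ProbabilityTheory Real

theorem StrictMono.monotone_comp_iff {α β γ : Type*} [Preorder α] [LinearOrder β] [Preorder γ]
    {h : β → γ} {f : α → β} (hh : StrictMono h) : Monotone (h ∘ f) ↔ Monotone f :=
  ⟨fun hm _ _ hab => hh.le_iff_le.mp (hm hab), hh.monotone.comp⟩

theorem StrictMono.antitone_comp_iff {α β γ : Type*} [Preorder α] [LinearOrder β] [Preorder γ]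
    {h : β → γ} {f : α → β} (hh : StrictMono h) : Antitone (h ∘ f) ↔ Antitone f :=
  ⟨fun hm _ _ hab => hh.le_iff_le.mp (hm hab), hh.monotone.comp_antitone⟩

theorem not_monotone_and_not_antitone_of_quadratic {f : ℝ → ℝ} {a b c : ℝ} (ha : a ≠ 0)
    (hf : ∀ x, f x = a * x ^ 2 + b * x + c) : ¬ Monotone f ∧ ¬ Antitone f := by
  set v := -b / (2 * a)
  have hvertex : ∀ t, f (v + t) = f v + a * t ^ 2 := fun t => by
    simp only [hf, v]; field_simp; ring
  have hleft := hvertex (-1)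
  have hright := hvertex 1
  -- `f (v ± 1) = f v + a`, so comparing `f` at `v - 1 ≤ v ≤ v + 1` forces `a ≤ 0 ≤ a`.
  refine ⟨fun hm => ha ?_, fun hm => ha ?_⟩
  all_goals
    have := hm (show v + -1 ≤ v by linarith)
    have := hm (show v ≤ v + 1 by linarith)
    linarith

theorem div_add_eq_sigmoid_log_sub {a b : ℝ} (ha : 0 < a) (hb : 0 < b) :
    a / (a + b) = sigmoid (log a - log b) := by
  rw [sigmoid_def, neg_sub, exp_sub, exp_log ha, exp_log hb]
  field_simp

theorem log_gaussianPDFReal (μ : ℝ) {v : NNReal} (hv : v ≠ 0) (x : ℝ) :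
    log (gaussianPDFReal μ v x) = -log √(2 * π * v) - (x - μ) ^ 2 / (2 * v) := by
  have : 0 < (v : ℝ) := by positivity
  rw [gaussianPDFReal, log_mul (by positivity) (exp_pos _).ne', log_inv, log_exp]
  ring

theorem exists_log_gaussianPDFReal_sub_log_gaussianPDFReal_eq_quadratic (μ₀ μ₁ : ℝ)
    {v₀ v₁ : NNReal} (hv₀ : v₀ ≠ 0) (hv₁ : v₁ ≠ 0) :
    ∃ b c : ℝ, ∀ x, log (gaussianPDFReal μ₁ v₁ x) - log (gaussianPDFReal μ₀ v₀ x) =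
      ((v₀ : ℝ)⁻¹ - (v₁ : ℝ)⁻¹) / 2 * x ^ 2 + b * x + c := by
  have : (v₀ : ℝ) ≠ 0 := by positivity
  have : (v₁ : ℝ) ≠ 0 := by positivity
  refine ⟨μ₁ / v₁ - μ₀ / v₀,
    μ₀ ^ 2 / (2 * v₀) - μ₁ ^ 2 / (2 * v₁) + log √(2 * π * v₀) - log √(2 * π * v₁), fun x => ?_⟩
  rw [log_gaussianPDFReal _ hv₀, log_gaussianPDFReal _ hv₁]
  field_simp
  ring

theorem discriminant_not_monotone_general
    (σ0 σ1 μ0 μ1 φ : ℝ) (hσ0 : 0 < σ0) (hσ1 : 0 < σ1) (hσ : σ0 ≠ σ1)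
    (hφ : φ ∈ Set.Ioo (0 : ℝ) 1)
    (f0 f1 g : ℝ → ℝ)
    (hf0 : f0 = gaussianPDFReal μ0 ⟨σ0 ^ 2, sq_nonneg σ0⟩)
    (hf1 : f1 = gaussianPDFReal μ1 ⟨σ1 ^ 2, sq_nonneg σ1⟩)
    (hg : ∀ x, g x = φ * f1 x / (φ * f1 x + (1 - φ) * f0 x)) :
    ¬ Monotone g ∧ ¬ Antitone g := by
  obtain ⟨hφ0, hφ1⟩ := hφ
  have hv₀ : (⟨σ0 ^ 2, sq_nonneg σ0⟩ : NNReal) ≠ 0 :=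
    ne_of_gt (show (0 : ℝ) < σ0 ^ 2 by positivity)
  have hv₁ : (⟨σ1 ^ 2, sq_nonneg σ1⟩ : NNReal) ≠ 0 :=
    ne_of_gt (show (0 : ℝ) < σ1 ^ 2 by positivity)
  have hf0_pos : ∀ x, 0 < f0 x := fun x => hf0 ▸ gaussianPDFReal_pos _ _ x hv₀
  have hf1_pos : ∀ x, 0 < f1 x := fun x => hf1 ▸ gaussianPDFReal_pos _ _ x hv₁
  have ha : ((σ0 ^ 2)⁻¹ - (σ1 ^ 2)⁻¹) / 2 ≠ 0 := by
    rw [div_ne_zero_iff, sub_ne_zero, Ne, inv_inj, pow_left_inj₀ hσ0.le hσ1.le two_ne_zero]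
    exact ⟨hσ, two_ne_zero⟩
  obtain ⟨b, c, hllr⟩ : ∃ b c : ℝ, ∀ x, log (f1 x) - log (f0 x) =
      ((σ0 ^ 2)⁻¹ - (σ1 ^ 2)⁻¹) / 2 * x ^ 2 + b * x + c := by
    rw [hf0, hf1]
    exact exists_log_gaussianPDFReal_sub_log_gaussianPDFReal_eq_quadratic μ0 μ1 hv₀ hv₁
  have hg_sigmoid : g = sigmoid ∘ fun x =>
      ((σ0 ^ 2)⁻¹ - (σ1 ^ 2)⁻¹) / 2 * x ^ 2 + b * x + (log φ - log (1 - φ) + c) := by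
    funext x
    have hφ' : 0 < 1 - φ := sub_pos.mpr hφ1
    rw [Function.comp_apply, hg,
      div_add_eq_sigmoid_log_sub (mul_pos hφ0 (hf1_pos x)) (mul_pos hφ' (hf0_pos x)),
      log_mul hφ0.ne' (hf1_pos x).ne', log_mul hφ'.ne' (hf0_pos x).ne']
    congr 1
    linarith [hllr x]
  rw [hg_sigmoid, sigmoid_strictMono.monotone_comp_iff, sigmoid_strictMono.antitone_comp_iff]
  exact not_monotone_and_not_antitone_of_quadratic ha fun _ => rfl

/-- If the two classes emit normally distributed signals with unequal variances
σ0² ≠ σ1² (σ0, σ1 > 0), means μ0 < μ1, and prior probability φ ∈ (0,1) of the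
positive class, then the discriminant transformation
g(x) = φ·f1(x) / (φ·f1(x) + (1−φ)·f0(x)) is not monotone on ℝ. -/
theorem discriminant_not_monotone
    (σ0 σ1 μ0 μ1 φ : ℝ) (hσ0 : 0 < σ0) (hσ1 : 0 < σ1) (hσ : σ0 ≠ σ1)
    (hμ : μ0 < μ1) (hφ : φ ∈ Set.Ioo (0 : ℝ) 1)
    (f0 f1 g : ℝ → ℝ)
    (hf0 : f0 = gaussianPDFReal μ0 ⟨σ0 ^ 2, sq_nonneg σ0⟩)
    (hf1 : f1 = gaussianPDFReal μ1 ⟨σ1 ^ 2, sq_nonneg σ1⟩)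
    (hg : ∀ x, g x = φ * f1 x / (φ * f1 x + (1 - φ) * f0 x)) :
    ¬ Monotone g ∧ ¬ Antitone g :=
  discriminant_not_monotone_general σ0 σ1 μ0 μ1 φ hσ0 hσ1 hσ hφ f0 f1 g hf0 hf1 hg
end

section
/- Let φ ∈ (0,1), δ > 0, let g(x) = 1 / (1 + ((1−φ)/φ)·exp(−δx + δ²/2)), and let logit(p) = log(p/(1−p)). Let P be the Gaussian mixture measure (1−φ)·N(0,1) + φ·N(δ,1) on ℝ. Then the pushforward of P under the map x ↦ logit(g(x)) equals the Gaussian mixture measure (1−φ)·N(m, δ²) + φ·N(m + δ², δ²), where m = log(φ/(1−φ)) − δ²/2. Consequently the discriminant distribution disc(φ, δ) is a two-component logit-normal mixture distribution. -/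
/-!
On the log-odds scale the discriminant is affine: `logit (g x) = δ * x + m`. An affine image of
a Gaussian is Gaussian, so pushing each component of the mixture forward gives
`N(0,1) ↦ N(m, δ²)` and `N(δ,1) ↦ N(m + δ², δ²)`, with the mixture weights unchanged.
-/

open ProbabilityTheory Real MeasureTheory

lemma log_odds_one_div_one_add {y : ℝ} (hy : 0 < y) :
    log ((1 / (1 + y)) / (1 - 1 / (1 + y))) = -log y := by
  have hy' : 1 + y ≠ 0 := by positivity
  rw [one_sub_div hy', add_sub_cancel_left, div_div_div_cancel_right₀ hy', one_div, log_inv]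

lemma gaussianReal_map_affine (a b μ : ℝ) (v : NNReal) :
    (gaussianReal μ v).map (fun x => a * x + b) =
      gaussianReal (a * μ + b) ⟨a ^ 2 * v, by positivity⟩ := by
  have hcomp : (fun x => a * x + b) = (· + b) ∘ (a * ·) := rfl
  rw [hcomp, ← Measure.map_map (by fun_prop) (by fun_prop), gaussianReal_map_const_mul,
    gaussianReal_map_add_const]
  rfl

theorem discriminant_logit_normal_mixture_general
    (φ δ : ℝ) (hφ : φ ∈ Set.Ioo (0 : ℝ) 1)
    (g : ℝ → ℝ)
    (hg : ∀ x, g x = 1 / (1 + ((1 - φ) / φ) * Real.exp (-δ * x + δ ^ 2 / 2)))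
    (P : Measure ℝ)
    (hP : P = ENNReal.ofReal (1 - φ) • gaussianReal 0 1
            + ENNReal.ofReal φ • gaussianReal δ 1)
    (m : ℝ) (hm : m = Real.log (φ / (1 - φ)) - δ ^ 2 / 2) :
    Measure.map (fun x => Real.log (g x / (1 - g x))) P =
      ENNReal.ofReal (1 - φ) • gaussianReal m ⟨δ ^ 2, sq_nonneg δ⟩
        + ENNReal.ofReal φ • gaussianReal (m + δ ^ 2) ⟨δ ^ 2, sq_nonneg δ⟩ := by
  obtain ⟨hφ0, hφ1⟩ := hφ
  have hodds : 0 < (1 - φ) / φ := div_pos (by linarith) hφ0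
  have hlogit : (fun x => log (g x / (1 - g x))) = fun x => δ * x + m := by
    funext x
    rw [hg, log_odds_one_div_one_add (by positivity), log_mul hodds.ne' (exp_ne_zero _), log_exp,
      hm, ← inv_div, log_inv]
    ring
  rw [hlogit, hP, Measure.map_add _ _ (by fun_prop), Measure.map_smul, Measure.map_smul,
    gaussianReal_map_affine, gaussianReal_map_affine]
  simp only [NNReal.coe_one, mul_one, mul_zero, zero_add, ← sq, add_comm (δ ^ 2)]

/-- Discriminant distributions are logit-normal mixtures: the pushforward of the
Gaussian mixture (1−φ)·N(0,1) + φ·N(δ,1) under x ↦ logit(g(x)) equals the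
Gaussian mixture (1−φ)·N(m, δ²) + φ·N(m + δ², δ²), where
m = log(φ/(1−φ)) − δ²/2. -/
theorem discriminant_logit_normal_mixture
    (φ δ : ℝ) (hφ : φ ∈ Set.Ioo (0 : ℝ) 1) (hδ : 0 < δ)
    (g : ℝ → ℝ)
    (hg : ∀ x, g x = 1 / (1 + ((1 - φ) / φ) * Real.exp (-δ * x + δ ^ 2 / 2)))
    (P : Measure ℝ)
    (hP : P = ENNReal.ofReal (1 - φ) • gaussianReal 0 1
            + ENNReal.ofReal φ • gaussianReal δ 1)
    (m : ℝ) (hm : m = Real.log (φ / (1 - φ)) - δ ^ 2 / 2) :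
    Measure.map (fun x => Real.log (g x / (1 - g x))) P =
      ENNReal.ofReal (1 - φ) • gaussianReal m ⟨δ ^ 2, sq_nonneg δ⟩
        + ENNReal.ofReal φ • gaussianReal (m + δ ^ 2) ⟨δ ^ 2, sq_nonneg δ⟩ :=
  discriminant_logit_normal_mixture_general φ δ hφ g hg P hP m hm
end
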